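/- arXiv:1809.00697 — 2 statements merged into one kernel-verified Lean document; each statement's English description precedes it below -/
import Mathlib

section
/- Let X be a nonempty finite set and let C belong to the class 𝒞. Then the indirect cost φ(C) satisfies Axiom 1 (Blackwell monotonicity): for all π, π' ∈ Δ²(X), if π' = π∘k for some Borel kernel k that is mean-preserving π-a.e., then φ(C)(π) ≤ φ(C)(π'). -/
set_option linter.unusedSectionVars false

open MeasureTheory

namespace IC

variable {X : Type*} [Fintype X] [Nonempty X]

/-- The belief simplex Δ(X). -/
abbrev Δ (X : Type*) [Fintype X] : Set (X → ℝ) := stdSimplex ℝ X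

/-- Δ²(X): Borel probability measures on Δ(X). -/
abbrev PM (X : Type*) [Fintype X] := ProbabilityMeasure (Δ X)

/-- Barycenter of π ∈ Δ²(X). -/
noncomputable def bar (π : PM X) : X → ℝ :=
  fun x => ∫ ν, (ν : X → ℝ) x ∂(π : Measure (Δ X))

lemma eval_integrable (π : PM X) (x : X) :
    Integrable (fun ν : Δ X => (ν : X → ℝ) x) (π : Measure (Δ X)) := by
  have hc : Continuous (fun ν : Δ X => (ν : X → ℝ) x) :=
    (continuous_apply x).comp continuous_subtype_val
  refine (integrable_const (1 : ℝ)).mono' hc.aestronglyMeasurable ?_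
  refine Filter.Eventually.of_forall fun ν => ?_
  rw [Real.norm_eq_abs]
  refine (abs_of_nonneg (ν.2.1 x)).trans_le ?_
  calc (ν : X → ℝ) x ≤ ∑ y, (ν : X → ℝ) y :=
        Finset.single_le_sum (fun y _ => ν.2.1 y) (Finset.mem_univ x)
    _ = 1 := ν.2.2

lemma bar_mem (π : PM X) : bar π ∈ Δ X := by
  constructor
  · intro x; exact integral_nonneg fun ν => ν.2.1 x
  · calc ∑ x, bar π x
        = ∫ ν, ∑ x, (ν : X → ℝ) x ∂(π : Measure (Δ X)) :=
          (integral_finset_sum Finset.univ fun x _ => eval_integrable π x).symm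
      _ = ∫ _ν, (1 : ℝ) ∂(π : Measure (Δ X)) :=
          integral_congr_ae (Filter.Eventually.of_forall fun ν => ν.2.2)
      _ = 1 := by simp

/-- Barycenter as a point of the simplex. -/
noncomputable def barPt (π : PM X) : Δ X := ⟨bar π, bar_mem π⟩

/-- Dirac measure as an element of Δ²(X). -/
noncomputable def diracPM (μ : Δ X) : PM X := ⟨Measure.dirac μ, inferInstance⟩

lemma isProbabilityMeasure_bind {α β : Type*} [MeasurableSpace α] [MeasurableSpace β]
    (π : Measure α) [IsProbabilityMeasure π] (k : α → Measure β) (hk : Measurable k)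
    (hkp : ∀ a, IsProbabilityMeasure (k a)) : IsProbabilityMeasure (π.bind k) := by
  constructor
  rw [Measure.bind_apply MeasurableSet.univ hk.aemeasurable]
  have h1 : ∀ a, k a Set.univ = 1 := fun a => (hkp a).measure_univ
  simp [h1]

/-- The Borel σ-algebra on probability measures (generated by evaluations, via the
canonical σ-algebra on measures). -/
instance instMeasurableSpacePM {Ω : Type*} [MeasurableSpace Ω] :
    MeasurableSpace (ProbabilityMeasure Ω) :=
  MeasurableSpace.comap (fun μ => (μ : Measure Ω)) inferInstance

lemma measurable_pmCoe {Ω : Type*} [MeasurableSpace Ω] :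
    Measurable (fun μ : ProbabilityMeasure Ω => (μ : Measure Ω)) :=
  measurable_iff_comap_le.mpr le_rfl

/-- Composition π∘k of an information structure with a (Borel measurable) kernel. -/
noncomputable def comp (π : PM X) (k : Δ X → PM X) (hk : Measurable k) : PM X :=
  ⟨(π : Measure (Δ X)).bind (fun μ => (k μ : Measure (Δ X))),
    isProbabilityMeasure_bind _ _ (measurable_pmCoe.comp hk) (fun μ => (k μ).2)⟩

/-- ∫ π dP(π), for P a probability measure over Δ²(X). -/
noncomputable def joinPM (P : ProbabilityMeasure (PM X)) : PM X :=
  ⟨(P : Measure (PM X)).bind (fun π => (π : Measure (Δ X))),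
    isProbabilityMeasure_bind _ _ measurable_pmCoe (fun π => π.2)⟩

/-- A kernel is mean preserving π-a.e. -/
def MeanPreservingAE (π : PM X) (k : Δ X → PM X) : Prop :=
  ∀ᵐ μ ∂(π : Measure (Δ X)), bar (k μ) = (μ : X → ℝ)

/-- Axiom 1: Blackwell monotonicity. -/
def Axiom1 (C : PM X → ℝ) : Prop :=
  ∀ (π : PM X) (k : Δ X → PM X) (hk : Measurable k),
    MeanPreservingAE π k → C π ≤ C (comp π k hk)

/-- Axiom 2: subadditivity. -/
def Axiom2 (C : PM X → ℝ) : Prop :=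
  ∀ (π : PM X) (k : Δ X → PM X) (hk : Measurable k),
    C (comp π k hk) ≤ C π + ∫ μ, C (k μ) ∂(π : Measure (Δ X))

/-- The class 𝒞 of direct information cost functions. -/
structure ClassC (C : PM X → ℝ) : Prop where
  nonneg : ∀ π, 0 ≤ C π
  bounded : ∃ M : ℝ, ∀ π, C π ≤ M
  measurable : Measurable C
  dirac_zero : ∀ μ : Δ X, C (diracPM μ) = 0
  mixing : ∀ P : ProbabilityMeasure (PM X),
    (∃ μ₀ : X → ℝ, ∀ᵐ π ∂(P : Measure (PM X)), bar π = μ₀) →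
    C (joinPM P) ≤ ∫ π, C π ∂(P : Measure (PM X))
  contOn : ∀ X' : Set X, ContinuousOn C {π : PM X | {x | 0 < bar π x} = X'}

/-- A replication process for π. -/
structure RepProcess (π : PM X) where
  T : ℕ
  seq : ℕ → PM X
  k : ℕ → Δ X → PM X
  r : ℕ → Δ X → PM X
  k_meas : ∀ t, Measurable (k t)
  r_meas : ∀ t, Measurable (r t)
  init : seq 0 = diracPM (barPt π)
  final : seq (2 * T) = π
  k_mp : ∀ t, t < T → MeanPreservingAE (seq (2 * t)) (k t)
  k_comp : ∀ t, (ht : t < T) → seq (2 * t + 1) = comp (seq (2 * t)) (k t) (k_meas t)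
  r_mp : ∀ t, t < T → MeanPreservingAE (seq (2 * t + 2)) (r t)
  r_comp : ∀ t, (ht : t < T) → seq (2 * t + 1) = comp (seq (2 * t + 2)) (r t) (r_meas t)

/-- Total cost of a replication process. -/
noncomputable def totalCost (C : PM X → ℝ) {π : PM X} (R : RepProcess π) : ℝ :=
  ∑ t ∈ Finset.range R.T, ∫ μ, C (R.k t μ) ∂((R.seq (2 * t) : Measure (Δ X)))

/-- The indirect cost φ(C). -/
noncomputable def phi (C : PM X → ℝ) (π : PM X) : ℝ :=
  sInf (Set.range fun R : RepProcess π => totalCost C R)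

/-- Uniformly posterior separable cost. -/
def UPS (C : PM X → ℝ) : Prop :=
  ∃ H : (X → ℝ) → ℝ, ConvexOn ℝ (Δ X) H ∧
    ∀ π : PM X, C π = (∫ ν, H (ν : X → ℝ) ∂(π : Measure (Δ X))) - H (bar π)

/-! Any replication process for `π ∘ k` extends to one for `π` at no extra cost: append the
step that splits `π ∘ k` by the Dirac kernel (free, by Axiom 0) and recovers it as `π ∘ k` from
`π`. Hence the costs attainable for `π` include those for `π ∘ k`. -/

lemma measurable_diracPM : Measurable (diracPM : Δ X → PM X) := by
  intro s ⟨t, ht, hs⟩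
  exact hs ▸ Measure.measurable_dirac ht

lemma bar_diracPM (μ : Δ X) : bar (diracPM μ) = μ := by
  funext x
  simp [bar, diracPM]

lemma barPt_diracPM (μ : Δ X) : barPt (diracPM μ) = μ :=
  Subtype.ext (bar_diracPM μ)

lemma meanPreservingAE_diracPM (π : PM X) : MeanPreservingAE π diracPM :=
  Filter.Eventually.of_forall bar_diracPM

lemma meanPreservingAE_diracPM_const {μ : Δ X} {π : PM X} (h : bar π = μ) :
    MeanPreservingAE (diracPM μ) fun _ => π := by
  change ∀ᵐ ν : Δ X ∂Measure.dirac μ, bar π = (ν : X → ℝ)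
  rwa [ae_dirac_eq, Filter.eventually_pure]

lemma comp_diracPM (π : PM X) : comp π diracPM measurable_diracPM = π :=
  Subtype.ext Measure.bind_dirac

lemma diracPM_comp (μ : Δ X) (k : Δ X → PM X) (hk : Measurable k) :
    comp (diracPM μ) k hk = k μ :=
  Subtype.ext (Measure.dirac_bind (measurable_pmCoe.comp hk) μ)

lemma _root_.MeasureTheory.Measure.integral_bind {α β E : Type*} [MeasurableSpace α]
    [MeasurableSpace β] [NormedAddCommGroup E] [NormedSpace ℝ E] {μ : Measure α} [SFinite μ]
    (κ : ProbabilityTheory.Kernel α β) [ProbabilityTheory.IsSFiniteKernel κ] {f : β → E}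
    (hf : Integrable f (μ.bind κ)) :
    ∫ y, f y ∂(μ.bind κ) = ∫ x, ∫ y, f y ∂(κ x) ∂μ := by
  have h := ProbabilityTheory.Kernel.integral_comp (η := κ)
    (κ := ProbabilityTheory.Kernel.const Unit μ) (a := ()) (f := f)
  simpa [ProbabilityTheory.Kernel.comp_apply] using h hf

lemma bar_comp (π : PM X) (k : Δ X → PM X) (hk : Measurable k) (hmp : MeanPreservingAE π k) :
    bar (comp π k hk) = bar π := by
  funext x
  let κ : ProbabilityTheory.Kernel (Δ X) (Δ X) := ⟨fun μ => k μ, measurable_pmCoe.comp hk⟩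
  have : ProbabilityTheory.IsMarkovKernel κ := ⟨fun μ => (k μ).2⟩
  calc bar (comp π k hk) x = ∫ μ, bar (k μ) x ∂(π : Measure (Δ X)) :=
        Measure.integral_bind κ (eval_integrable (comp π k hk) x)
    _ = bar π x := integral_congr_ae (hmp.mono fun μ hμ => congrFun hμ x)

lemma barPt_eq_of_comp_eq {ρ π : PM X} {κ r : Δ X → PM X} {hκ : Measurable κ}
    {hr : Measurable r} (hκ_mp : MeanPreservingAE ρ κ) (hr_mp : MeanPreservingAE π r)
    (h : comp ρ κ hκ = comp π r hr) : barPt ρ = barPt π :=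
  Subtype.ext <| calc
    bar ρ = bar (comp ρ κ hκ) := (bar_comp ρ κ hκ hκ_mp).symm
    _ = bar (comp π r hr) := congrArg bar h
    _ = bar π := bar_comp π r hr hr_mp

namespace RepProcess

noncomputable def nil (μ : Δ X) : RepProcess (diracPM μ) where
  T := 0
  seq _ := diracPM μ
  k _ := diracPM
  r _ := diracPM
  k_meas _ := measurable_diracPM
  r_meas _ := measurable_diracPM
  init := by rw [barPt_diracPM]
  final := rfl
  k_mp _ h := absurd h (Nat.not_lt_zero _)
  k_comp _ h := absurd h (Nat.not_lt_zero _)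
  r_mp _ h := absurd h (Nat.not_lt_zero _)
  r_comp _ h := absurd h (Nat.not_lt_zero _)

variable {ρ π : PM X} {κ r : Δ X → PM X}

noncomputable def snoc (R : RepProcess ρ) (hκ : Measurable κ) (hr : Measurable r)
    (hκ_mp : MeanPreservingAE ρ κ) (hr_mp : MeanPreservingAE π r)
    (h : comp ρ κ hκ = comp π r hr) : RepProcess π where
  T := R.T + 1
  seq n := if n ≤ 2 * R.T then R.seq n else if n = 2 * R.T + 1 then comp π r hr else π
  k t := if t < R.T then R.k t else κ
  r t := if t < R.T then R.r t else r
  k_meas t := by split_ifs; exacts [R.k_meas t, hκ]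
  r_meas t := by split_ifs; exacts [R.r_meas t, hr]
  init := by
    rw [if_pos (Nat.zero_le _), R.init, barPt_eq_of_comp_eq hκ_mp hr_mp h]
  final := by rw [if_neg (by omega), if_neg (by omega)]
  k_mp t ht := by
    rcases Nat.lt_succ_iff_lt_or_eq.1 ht with ht | rfl
    · simpa [ht, show 2 * t ≤ 2 * R.T by omega] using R.k_mp t ht
    · simpa [R.final] using hκ_mp
  k_comp t ht := by
    rcases Nat.lt_succ_iff_lt_or_eq.1 ht with ht | rfl
    · simpa [ht, show 2 * t ≤ 2 * R.T by omega, show 2 * t + 1 ≤ 2 * R.T by omega]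
        using R.k_comp t ht
    · simpa [R.final] using h.symm
  r_mp t ht := by
    rcases Nat.lt_succ_iff_lt_or_eq.1 ht with ht | rfl
    · simpa [ht, show 2 * t + 2 ≤ 2 * R.T by omega] using R.r_mp t ht
    · simpa [show ¬2 * R.T + 2 ≤ 2 * R.T by omega] using hr_mp
  r_comp t ht := by
    rcases Nat.lt_succ_iff_lt_or_eq.1 ht with ht | rfl
    · simpa [ht, show 2 * t + 1 ≤ 2 * R.T by omega, show 2 * t + 2 ≤ 2 * R.T by omega]
        using R.r_comp t ht
    · simp [show ¬2 * R.T + 2 ≤ 2 * R.T by omega]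

lemma totalCost_snoc (C : PM X → ℝ) (R : RepProcess ρ) (hκ : Measurable κ) (hr : Measurable r)
    (hκ_mp : MeanPreservingAE ρ κ) (hr_mp : MeanPreservingAE π r)
    (h : comp ρ κ hκ = comp π r hr) :
    totalCost C (R.snoc hκ hr hκ_mp hr_mp h) =
      totalCost C R + ∫ μ, C (κ μ) ∂(ρ : Measure (Δ X)) := by
  simp only [totalCost, snoc, Finset.sum_range_succ, lt_irrefl, if_false, le_refl, if_true,
    R.final]
  congr 1
  refine Finset.sum_congr rfl fun t ht => ?_
  have ht : t < R.T := Finset.mem_range.1 ht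
  simp [ht, show 2 * t ≤ 2 * R.T by omega]

/-- One step from `δ_{bar π}`: reveal `π` outright, then garble nothing. -/
instance (π : PM X) : Nonempty (RepProcess π) :=
  ⟨(nil (barPt π)).snoc (κ := fun _ => π) measurable_const measurable_diracPM
    (meanPreservingAE_diracPM_const rfl) (meanPreservingAE_diracPM π)
    (by rw [diracPM_comp, comp_diracPM])⟩

end RepProcess

lemma phi_le_totalCost {C : PM X → ℝ} (hC : ∀ π, 0 ≤ C π) {π : PM X} (R : RepProcess π) :
    phi C π ≤ totalCost C R :=
  csInf_le ⟨0, by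
    rintro _ ⟨R', rfl⟩
    exact Finset.sum_nonneg fun _ _ => integral_nonneg fun _ => hC _⟩ ⟨R, rfl⟩

/-- for C ∈ 𝒞 the indirect cost φ(C) is Blackwell monotone. -/
theorem phi_blackwell_mono (C : PM X → ℝ) (hC : ClassC C)
    (π : PM X) (k : Δ X → PM X) (hk : Measurable k) (hmp : MeanPreservingAE π k) :
    phi C π ≤ phi C (comp π k hk) := by
  refine le_csInf (Set.range_nonempty _) ?_
  rintro _ ⟨R, rfl⟩
  calc phi C π
      ≤ totalCost C (R.snoc measurable_diracPM hk (meanPreservingAE_diracPM _) hmp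
          (comp_diracPM _)) := phi_le_totalCost hC.nonneg _
    _ = totalCost C R := by simp [RepProcess.totalCost_snoc, hC.dirac_zero]

end IC
end

section
/- Let X be a nonempty finite set. Define the negentropy H_E : Δ(X) → ℝ by H_E(μ) = ∑_x μ(x)·log μ(x) (with 0·log 0 := 0), and the mutual-information cost C_MI(π) = ∫ H_E dπ − H_E(bar(π)) for π ∈ Δ²(X). Then C_MI is locally characterized by half the Fisher information matrix: for every μ₀ ∈ Δ(X)° and every ε > 0 there exists δ > 0 such that every π ∈ Δ²(X) supported in the open δ-ball around μ₀, with μ = bar(π), satisfies |C_MI(π) − (1/2)·∫ ∑_x (ν(x)−μ(x))²/μ(x) dπ(ν)| ≤ ε·∫ ‖ν−μ‖² dπ(ν). -/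
set_option linter.unusedSectionVars false

open MeasureTheory

namespace IC

variable {X : Type*} [Fintype X] [Nonempty X]

/-- The relative interior Δ(X)° of the simplex. -/
def interiorSimplex (X : Type*) [Fintype X] : Set (X → ℝ) :=
  {μ | (∀ x, 0 < μ x) ∧ ∑ x, μ x = 1}

/-- Squared Euclidean norm on ℝ^X. -/
def sqnorm (y : X → ℝ) : ℝ := ∑ x, (y x) ^ 2

/-- Quadratic form yᵀ B y. -/
def quadForm (B : Matrix X X ℝ) (y : X → ℝ) : ℝ := ∑ x, ∑ x', y x * B x x' * y x'

/-- Open Euclidean ball in ℝ^X. -/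
def ball2 (μ₀ : X → ℝ) (δ : ℝ) : Set (X → ℝ) := {ν | Real.sqrt (sqnorm (ν - μ₀)) < δ}

/-- π is supported in the set s. -/
def SuppIn (π : PM X) (s : Set (X → ℝ)) : Prop :=
  ∀ᵐ (ν : Δ X) ∂(π : Measure (Δ X)), (ν : X → ℝ) ∈ s

/-- C is locally characterized by the matrix field B (Assumption `ass:diff`). -/
def LocChar (C : PM X → ℝ) (B : (X → ℝ) → Matrix X X ℝ) : Prop :=
  ∀ μ₀ ∈ interiorSimplex X, ∀ ε > 0, ∃ δ > 0, ∀ π : PM X, SuppIn π (ball2 μ₀ δ) →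
    |C π - ∫ ν, quadForm (B (bar π)) ((ν : X → ℝ) - bar π) ∂(π : Measure (Δ X))| ≤
      ε * ∫ ν, sqnorm ((ν : X → ℝ) - bar π) ∂(π : Measure (Δ X))

/-- B is a continuous, symmetric, positive semi-definite* matrix field on Δ(X)°. -/
def GoodB (B : (X → ℝ) → Matrix X X ℝ) : Prop :=
  ContinuousOn B (interiorSimplex X) ∧
  (∀ μ ∈ interiorSimplex X, (B μ).IsSymm) ∧
  (∀ μ ∈ interiorSimplex X, ∀ y : X → ℝ, ∑ x, y x = 0 → 0 ≤ quadForm (B μ) y)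

/-- Assumption 2: C is bounded below by a multiple of the posterior variance. -/
def Assumption2 (C : PM X → ℝ) : Prop :=
  ∃ m : ℝ, 0 < m ∧ ∀ π : PM X,
    m * ∫ ν, sqnorm ((ν : X → ℝ) - bar π) ∂(π : Measure (Δ X)) ≤ C π

/-- Bregman (uniformly posterior separable) cost ∫H dπ − H(bar π) for a potential H. -/
noncomputable def bregman (H : (X → ℝ) → ℝ) (π : PM X) : ℝ :=
  (∫ ν, H (ν : X → ℝ) ∂(π : Measure (Δ X))) - H (bar π)

/-- Negentropy ∑ μ(x) log μ(x) (with 0·log 0 = 0, which holds as Real.log 0 = 0). -/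
noncomputable def negEnt (μ : X → ℝ) : ℝ := ∑ x, μ x * Real.log (μ x)

/-!
Near `a > 0`, `t log t` has the Taylor expansion
`b log b = a log a + (log a + 1)(b - a) + (b - a)² / (2a) + O(|b - a|³ / a²)`.
Apply it coordinatewise at `a = bar π x`: the linear terms integrate to zero against `π`, so
`C_MI(π) - ½ ∫ ∑ₓ (ν x - bar π x)² / bar π x dπ` is the integral of the cubic remainder.
If `π` lives on a small ball around `μ₀ ∈ Δ(X)°`, so does `bar π`; this keeps `bar π x`
bounded below and makes the remainder at most `ε ‖ν - bar π‖²`.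
-/

lemma abs_one_add_mul_log_one_add_sub_le {u : ℝ} (hu : |u| ≤ 1 / 2) :
    |(1 + u) * Real.log (1 + u) - u - u ^ 2 / 2| ≤ 4 * |u| ^ 3 := by
  have hlog : |Real.log (1 + u) - u + u ^ 2 / 2| ≤ 2 * |u| ^ 3 := by
    have h := Real.abs_log_sub_add_sum_range_le (x := -u) (by rw [abs_neg]; linarith) 2
    norm_num [Finset.sum_range_succ] at h
    calc |Real.log (1 + u) - u + u ^ 2 / 2| = |-u + u ^ 2 / 2 + Real.log (1 + u)| := by ring_nf
      _ ≤ |u| ^ 3 / (1 - |u|) := h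
      _ ≤ 2 * |u| ^ 3 := by
          rw [div_le_iff₀ (by linarith)]; nlinarith [pow_nonneg (abs_nonneg u) 3]
  have h1u : |1 + u| ≤ 3 / 2 := by
    calc |1 + u| ≤ |1| + |u| := abs_add_le _ _
      _ ≤ 3 / 2 := by rw [abs_one]; linarith
  calc |(1 + u) * Real.log (1 + u) - u - u ^ 2 / 2|
      = |(1 + u) * (Real.log (1 + u) - u + u ^ 2 / 2) - u ^ 3 / 2| := by ring_nf
    _ ≤ |1 + u| * |Real.log (1 + u) - u + u ^ 2 / 2| + |u| ^ 3 / 2 := by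
        refine (abs_sub _ _).trans_eq ?_
        rw [abs_mul, abs_div, abs_pow, abs_two]
    _ ≤ 3 / 2 * (2 * |u| ^ 3) + |u| ^ 3 / 2 := by gcongr
    _ ≤ 4 * |u| ^ 3 := by nlinarith [pow_nonneg (abs_nonneg u) 3]

lemma abs_mul_log_sub_taylor_le {a b : ℝ} (ha : 0 < a) (hab : |b - a| ≤ a / 2) :
    |b * Real.log b - a * Real.log a - (Real.log a + 1) * (b - a) - (b - a) ^ 2 / (2 * a)| ≤
      4 * |b - a| / a ^ 2 * (b - a) ^ 2 := by
  set u := (b - a) / a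
  have hb : b = a * (1 + u) := by simp only [u]; field_simp; ring
  have hu : |u| ≤ 1 / 2 := by
    rw [abs_div, abs_of_pos ha, div_le_iff₀ ha]; linarith
  have h1u : 0 < 1 + u := by linarith [neg_abs_le u]
  have hba : b - a = a * u := by rw [hb]; ring
  calc |b * Real.log b - a * Real.log a - (Real.log a + 1) * (b - a) - (b - a) ^ 2 / (2 * a)|
      = |a * ((1 + u) * Real.log (1 + u) - u - u ^ 2 / 2)| := by
        rw [hba, hb, Real.log_mul ha.ne' h1u.ne']
        congr 1; field_simp; ring
    _ = a * |(1 + u) * Real.log (1 + u) - u - u ^ 2 / 2| := by rw [abs_mul, abs_of_pos ha]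
    _ ≤ a * (4 * |u| ^ 3) := by gcongr; exact abs_one_add_mul_log_one_add_sub_le hu
    _ = 4 * |b - a| / a ^ 2 * (b - a) ^ 2 := by
        rw [hba, abs_mul, abs_of_pos ha, ← sq_abs (a * u), abs_mul, abs_of_pos ha]
        field_simp

lemma continuous_negEnt : Continuous (negEnt : (X → ℝ) → ℝ) := by
  unfold negEnt; fun_prop

lemma abs_negEnt_sub_taylor_le {μ ν : X → ℝ} {η : ℝ} (hμ : ∀ x, 0 < μ x)
    (hνμ : ∀ x, |ν x - μ x| ≤ μ x / 2) (hη : ∀ x, 4 * |ν x - μ x| / μ x ^ 2 ≤ η) :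
    |negEnt ν - negEnt μ - ∑ x, (Real.log (μ x) + 1) * (ν x - μ x) -
        1 / 2 * ∑ x, (ν x - μ x) ^ 2 / μ x| ≤ η * sqnorm (ν - μ) := by
  have hsum : negEnt ν - negEnt μ - ∑ x, (Real.log (μ x) + 1) * (ν x - μ x) -
      1 / 2 * ∑ x, (ν x - μ x) ^ 2 / μ x = ∑ x, (ν x * Real.log (ν x) - μ x * Real.log (μ x) -
        (Real.log (μ x) + 1) * (ν x - μ x) - (ν x - μ x) ^ 2 / (2 * μ x)) := by
    simp only [negEnt, Finset.mul_sum, ← Finset.sum_sub_distrib]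
    refine Finset.sum_congr rfl fun x _ => ?_
    field_simp [(hμ x).ne']
  rw [hsum, sqnorm, Finset.mul_sum]
  refine (Finset.abs_sum_le_sum_abs _ _).trans (Finset.sum_le_sum fun x _ => ?_)
  exact (abs_mul_log_sub_taylor_le (hμ x) (hνμ x)).trans
    (mul_le_mul_of_nonneg_right (hη x) (sq_nonneg _))

@[fun_prop]
lemma continuous_apply_coe (x : X) : Continuous fun ν : Δ X => (ν : X → ℝ) x :=
  (continuous_apply x).comp continuous_subtype_val

lemma integrable_of_continuous (π : PM X) {f : Δ X → ℝ} (hf : Continuous f) :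
    Integrable f (π : Measure (Δ X)) :=
  hf.integrable_of_hasCompactSupport (.of_compactSpace f)

lemma integral_sum_mul_sub_bar (π : PM X) (c : X → ℝ) :
    ∫ ν, ∑ x, c x * ((ν : X → ℝ) x - bar π x) ∂(π : Measure (Δ X)) = 0 := by
  rw [integral_finsetSum]
  · refine Finset.sum_eq_zero fun x _ => ?_
    rw [integral_const_mul, integral_sub (eval_integrable π x) (integrable_const _),
      integral_const]
    simp [bar]
  · exact fun x _ => ((eval_integrable π x).sub (integrable_const _)).const_mul _

lemma abs_bregman_sub_integral_le {H : (X → ℝ) → ℝ} {Q : Δ X → ℝ}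
    (hH : Continuous fun ν : Δ X => H ν) (hQ : Continuous Q) (π : PM X) (c : X → ℝ) {ε : ℝ}
    (hbound : ∀ᵐ ν : Δ X ∂(π : Measure (Δ X)), |H ν - H (bar π) -
      ∑ x, c x * ((ν : X → ℝ) x - bar π x) - Q ν| ≤ ε * sqnorm ((ν : X → ℝ) - bar π)) :
    |bregman H π - ∫ ν, Q ν ∂(π : Measure (Δ X))| ≤
      ε * ∫ ν, sqnorm ((ν : X → ℝ) - bar π) ∂(π : Measure (Δ X)) := by
  have hHi := integrable_of_continuous π hH
  have hQi := integrable_of_continuous π hQ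
  have hlini : Integrable (fun ν : Δ X => ∑ x, c x * ((ν : X → ℝ) x - bar π x))
      (π : Measure (Δ X)) := integrable_of_continuous π (by fun_prop)
  have hsqi : Integrable (fun ν : Δ X => sqnorm ((ν : X → ℝ) - bar π)) (π : Measure (Δ X)) :=
    integrable_of_continuous π (by simp only [sqnorm, Pi.sub_apply]; fun_prop)
  have hremi := ((hHi.sub' (integrable_const (H (bar π)))).sub' hlini).sub' hQi
  calc |bregman H π - ∫ ν, Q ν ∂(π : Measure (Δ X))|
      = |∫ ν, (H ν - H (bar π) - ∑ x, c x * ((ν : X → ℝ) x - bar π x) - Q ν)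
          ∂(π : Measure (Δ X))| := by
        rw [integral_sub ((hHi.sub' (integrable_const _)).sub' hlini) hQi,
          integral_sub (hHi.sub' (integrable_const _)) hlini,
          integral_sub hHi (integrable_const _), integral_const, integral_sum_mul_sub_bar]
        simp [bregman]
    _ ≤ ∫ ν, |H ν - H (bar π) - ∑ x, c x * ((ν : X → ℝ) x - bar π x) - Q ν|
          ∂(π : Measure (Δ X)) := abs_integral_le_integral_abs
    _ ≤ ∫ ν, ε * sqnorm ((ν : X → ℝ) - bar π) ∂(π : Measure (Δ X)) :=
        integral_mono_ae hremi.abs (hsqi.const_mul ε) hbound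
    _ = ε * ∫ ν, sqnorm ((ν : X → ℝ) - bar π) ∂(π : Measure (Δ X)) := integral_const_mul _ _

lemma abs_apply_le_sqrt_sqnorm (y : X → ℝ) (x : X) : |y x| ≤ Real.sqrt (sqnorm y) := by
  rw [← Real.sqrt_sq_eq_abs]
  exact Real.sqrt_le_sqrt (Finset.single_le_sum (fun i _ => sq_nonneg (y i)) (Finset.mem_univ x))

lemma SuppIn.ae_abs_sub_le {π : PM X} {μ₀ : X → ℝ} {δ : ℝ} (h : SuppIn π (ball2 μ₀ δ)) :
    ∀ᵐ ν : Δ X ∂(π : Measure (Δ X)), ∀ x, |(ν : X → ℝ) x - μ₀ x| ≤ δ := by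
  filter_upwards [h] with ν hν x
  exact (abs_apply_le_sqrt_sqnorm _ x).trans hν.le

lemma abs_bar_sub_le {π : PM X} {x : X} {c δ : ℝ}
    (h : ∀ᵐ ν : Δ X ∂(π : Measure (Δ X)), |(ν : X → ℝ) x - c| ≤ δ) : |bar π x - c| ≤ δ := by
  have hint : bar π x - c = ∫ ν, ((ν : X → ℝ) x - c) ∂(π : Measure (Δ X)) := by
    rw [integral_sub (eval_integrable π x) (integrable_const _), integral_const]
    simp [bar]
  rw [hint, ← Real.norm_eq_abs]
  simpa using norm_integral_le_of_norm_le_const (μ := (π : Measure (Δ X)))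
    (h.mono fun ν hν => (Real.norm_eq_abs _).trans_le hν)

/-- the mutual-information cost is locally characterized by half the
Fisher information matrix. -/
theorem mutualInformation_locChar :
    ∀ μ₀ ∈ interiorSimplex X, ∀ ε > 0, ∃ δ > 0, ∀ π : PM X, SuppIn π (ball2 μ₀ δ) →
      |bregman negEnt π -
          (1 / 2) * ∫ ν, ∑ x, ((ν : X → ℝ) x - bar π x) ^ 2 / bar π x ∂(π : Measure (Δ X))| ≤
        ε * ∫ ν, sqnorm ((ν : X → ℝ) - bar π) ∂(π : Measure (Δ X)) := by
  intro μ₀ hμ₀ ε hε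
  obtain ⟨x₀, hx₀⟩ := Finite.exists_min μ₀
  have hm : 0 < μ₀ x₀ := hμ₀.1 x₀
  set m := μ₀ x₀
  -- chosen so that `|ν x - bar π x| ≤ 2δ ≤ bar π x / 2` and `4 · 2δ / (m / 2)² ≤ ε`
  refine ⟨min (m / 8) (ε * m ^ 2 / 32), by positivity, fun π hπ => ?_⟩
  have hδm := min_le_left (m / 8) (ε * m ^ 2 / 32)
  have hδε := min_le_right (m / 8) (ε * m ^ 2 / 32)
  set δ := min (m / 8) (ε * m ^ 2 / 32)
  have hν := hπ.ae_abs_sub_le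
  have hbar x : |bar π x - μ₀ x| ≤ δ := abs_bar_sub_le (hν.mono fun ν h => h x)
  have hbar_ge x : m / 2 ≤ bar π x := by
    linarith [hx₀ x, (abs_le.mp (hbar x)).1]
  rw [← integral_const_mul]
  refine abs_bregman_sub_integral_le (continuous_negEnt.comp continuous_subtype_val)
    (by fun_prop) π (fun x => Real.log (bar π x) + 1) ?_
  filter_upwards [hν] with ν hν
  have hνbar x : |(ν : X → ℝ) x - bar π x| ≤ 2 * δ := by
    have := abs_sub_le ((ν : X → ℝ) x) (μ₀ x) (bar π x)
    rw [abs_sub_comm (μ₀ x)] at this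
    linarith [hν x, hbar x]
  refine abs_negEnt_sub_taylor_le (fun x => by linarith [hbar_ge x]) (fun x => ?_) (fun x => ?_)
  · linarith [hνbar x, hbar_ge x]
  · have hsq : m ^ 2 / 4 ≤ bar π x ^ 2 := by nlinarith [hbar_ge x]
    rw [div_le_iff₀ (by nlinarith)]
    nlinarith [hνbar x, mul_le_mul_of_nonneg_left hsq hε.le]

end IC
end
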